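/- arXiv:2508.08870 — 2 statements merged into one kernel-verified Lean document; each statement's English description precedes it below -/
import Mathlib

section
/- Let d ≥ 3 be an odd integer and let n be a positive integer divisible by d + 1 with n ≥ d + 1. Then there exists a set P of n points in ℝ^d whose affine span is all of ℝ^d such that for every point x ∈ P, the number of distinct lines connecting x to the other points of P is exactly n·(1 − 2/(d+1)) + 1. -/
/-- The set of distinct lines connecting a point `x` to the other points of a
finite set `P` in `ℝ^d`: the affine spans of `{x, p}` for points `p ∈ P` with
`p ≠ x`. -/
def linesThrough {d : ℕ} (P : Finset (Fin d → ℝ)) (x : Fin d → ℝ) :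
    Set (AffineSubspace ℝ (Fin d → ℝ)) :=
  {L | ∃ p ∈ P, p ≠ x ∧ L = affineSpan ℝ ({x, p} : Set (Fin d → ℝ))}

namespace FewLinesAux

noncomputable def pt (d i s : ℕ) : Fin d → ℝ := fun a =>
  (if (a : ℕ) = 2 * i then (s : ℝ) else 0) + (if (a : ℕ) + 1 = 2 * i then 1 else 0)

lemma pt_eval_even {d : ℕ} (i s j : ℕ) {a : Fin d} (ha : (a : ℕ) = 2 * j) :
    pt d i s a = if j = i then (s : ℝ) else 0 := by
  simp only [pt]
  rcases eq_or_ne j i with rfl | hne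
  · rw [if_pos ha, if_neg (by omega), if_pos rfl]; ring
  · rw [if_neg (by omega), if_neg (by omega), if_neg hne]; ring

lemma pt_eval_odd {d : ℕ} (i s j : ℕ) (hj : 1 ≤ j) {a : Fin d} (ha : (a : ℕ) + 1 = 2 * j) :
    pt d i s a = if j = i then (1 : ℝ) else 0 := by
  simp only [pt]
  rcases eq_or_ne j i with rfl | hne
  · rw [if_neg (by omega), if_pos ha, if_pos rfl]; ring
  · rw [if_neg (by omega), if_neg (by omega), if_neg hne]; ring

lemma core {d i t j s l r : ℕ} (hi : 2 * i < d) (hj : 2 * j < d) (hl : 2 * l < d)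
    (hji : j ≠ i) {lam : ℝ}
    (h : ∀ a : Fin d, pt d j s a - pt d i t a = lam * (pt d l r a - pt d i t a)) :
    l = j ∧ r = s := by
  rcases Nat.eq_zero_or_pos j with hj0 | hj1
  · -- j = 0, hence i ≥ 1
    have hi1 : 1 ≤ i := by omega
    have h1 := h ⟨2 * i - 1, by omega⟩
    rw [pt_eval_odd j s i hi1 (by simp; omega), pt_eval_odd i t i hi1 (by simp; omega),
      pt_eval_odd l r i hi1 (by simp; omega), if_pos rfl,
      if_neg (fun hh => hji hh.symm)] at h1
    by_cases hil : i = l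
    · rw [if_pos hil] at h1; exfalso; simp at h1
    · rw [if_neg hil] at h1
      have hlam : lam = 1 := by linarith
      subst hlam
      have key : ∀ a : Fin d, pt d j s a = pt d l r a := by
        intro a; have := h a; linarith
      by_cases hlj : l = j
      · refine ⟨hlj, ?_⟩
        have h2 := key ⟨2 * j, by omega⟩
        rw [pt_eval_even j s j rfl, pt_eval_even l r j rfl, if_pos rfl,
          if_pos hlj.symm] at h2
        exact_mod_cast h2.symm
      · exfalso
        have hl1 : 1 ≤ l := by omega
        have h2 := key ⟨2 * l - 1, by omega⟩
        rw [pt_eval_odd j s l hl1 (by simp; omega), pt_eval_odd l r l hl1 (by simp; omega),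
          if_neg hlj, if_pos rfl] at h2
        norm_num at h2
  · have h1 := h ⟨2 * j - 1, by omega⟩
    rw [pt_eval_odd j s j hj1 (by simp; omega), pt_eval_odd i t j hj1 (by simp; omega),
      pt_eval_odd l r j hj1 (by simp; omega), if_pos rfl, if_neg hji] at h1
    by_cases hjl : j = l
    · rw [if_pos hjl] at h1
      have hlam : lam = 1 := by linarith
      subst hlam
      have h2 := h ⟨2 * j, by omega⟩
      rw [pt_eval_even j s j rfl, pt_eval_even i t j rfl, pt_eval_even l r j rfl,
        if_pos rfl, if_neg hji, if_pos hjl] at h2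
      refine ⟨hjl.symm, ?_⟩
      have : (s : ℝ) = r := by linarith
      exact_mod_cast this.symm
    · rw [if_neg hjl] at h1; exfalso; simp at h1

lemma pt_inj {d i s j r : ℕ} (hi : 2 * i < d) (hj : 2 * j < d)
    (h : pt d i s = pt d j r) : i = j ∧ s = r := by
  by_cases hij : i = j
  · subst hij
    refine ⟨rfl, ?_⟩
    have h2 := congrFun h ⟨2 * i, hi⟩
    rw [pt_eval_even i s i rfl, pt_eval_even i r i rfl, if_pos rfl, if_pos rfl] at h2
    exact_mod_cast h2
  · exfalso
    have := core hj hi hj hij (lam := 0)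
      (fun a => by rw [congrFun h a]; ring)
    exact hij this.1.symm

noncomputable def lineOf (d : ℕ) (p0 p : ℕ × ℕ) : AffineSubspace ℝ (Fin d → ℝ) :=
  affineSpan ℝ ({pt d p0.1 p0.2, pt d p.1 p.2} : Set (Fin d → ℝ))

lemma mem_line_iff (d : ℕ) (p0 p p' : ℕ × ℕ) :
    pt d p'.1 p'.2 ∈ lineOf d p0 p ↔
      ∃ lam : ℝ, ∀ a : Fin d,
        pt d p'.1 p'.2 a - pt d p0.1 p0.2 a = lam * (pt d p.1 p.2 a - pt d p0.1 p0.2 a) := by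
  constructor
  · intro hm
    have h2 : (pt d p'.1 p'.2 - pt d p0.1 p0.2) +ᵥ pt d p0.1 p0.2 ∈
        lineOf d p0 p := by
      simpa [vadd_eq_add, sub_add_cancel] using hm
    rw [lineOf, vadd_left_mem_affineSpan_pair] at h2
    obtain ⟨lam, hlam⟩ := h2
    refine ⟨lam, fun a => ?_⟩
    have := congrFun hlam a
    simp only [Pi.smul_apply, Pi.sub_apply, vsub_eq_sub, smul_eq_mul] at this
    linarith
  · rintro ⟨lam, hl⟩
    have heq : pt d p'.1 p'.2 =
        lam • (pt d p.1 p.2 -ᵥ pt d p0.1 p0.2) +ᵥ pt d p0.1 p0.2 := by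
      funext a
      have := hl a
      simp only [Pi.add_apply, Pi.smul_apply, Pi.sub_apply, vsub_eq_sub, vadd_eq_add,
        smul_eq_mul]
      linarith
    rw [heq, lineOf]
    exact smul_vsub_vadd_mem_affineSpan_pair _ _ _

end FewLinesAux


open FewLinesAux Finset

/-- For every odd `d ≥ 3` and every `n ≥ d + 1` divisible by `d + 1`, there is a
set `P` of `n` points affinely spanning `ℝ^d` such that every point `x ∈ P` is
connected to the other points of `P` by exactly `n·(1 − 2/(d+1)) + 1` distinct
lines (obtained from `(d+1)/2` skew lines spanning `ℝ^d`, carrying `2n/(d+1)`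
points each). -/
theorem exists_config_few_lines_through_each_point (d n : ℕ)
    (hodd : Odd d) (hd : 3 ≤ d) (hdvd : (d + 1) ∣ n) (hn : d + 1 ≤ n) :
    ∃ P : Finset (Fin d → ℝ),
      P.card = n ∧
      affineSpan ℝ (P : Set (Fin d → ℝ)) = ⊤ ∧
      ∀ x ∈ P,
        ((linesThrough P x).ncard : ℝ) = (n : ℝ) * (1 - 2 / ((d : ℝ) + 1)) + 1 := by
  classical
  obtain ⟨e, rfl⟩ := hodd
  obtain ⟨q, hq⟩ := hdvd
  have he : 1 ≤ e := by omega
  have hq1 : 1 ≤ q := by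
    rcases Nat.eq_zero_or_pos q with h0 | h; · rw [h0, Nat.mul_zero] at hq; omega
    · exact h
  set D := 2 * e + 1 with hD
  set k := e + 1 with hk
  set m := 2 * q with hm
  have hm2 : 2 ≤ m := by omega
  have hkm : n = k * m := by rw [hq, hk, hm]; ring
  set I : Finset (ℕ × ℕ) := Finset.range k ×ˢ Finset.range m with hI
  have hmemI : ∀ p : ℕ × ℕ, p ∈ I ↔ p.1 < k ∧ p.2 < m := by
    intro p; simp [hI, Finset.mem_product]
  have hbnd : ∀ p : ℕ × ℕ, p ∈ I → 2 * p.1 < D := by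
    intro p hp; have := (hmemI p).mp hp; omega
  set P : Finset (Fin D → ℝ) := I.image (fun p => pt D p.1 p.2) with hP
  have hinj : ∀ p ∈ I, ∀ p' ∈ I, pt D p.1 p.2 = pt D p'.1 p'.2 → p = p' := by
    intro p hp p' hp' hpe
    have := pt_inj (hbnd p hp) (hbnd p' hp') hpe
    exact Prod.ext this.1 this.2
  refine ⟨P, ?_, ?_, ?_⟩
  · rw [hP, Finset.card_image_of_injOn (fun p hp p' hp' => hinj p (by simpa using hp) p' (by simpa using hp')),
      hI, Finset.card_product, Finset.card_range, Finset.card_range, hkm]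
  · -- affine span is everything
    have hmemP : ∀ p : ℕ × ℕ, p ∈ I → pt D p.1 p.2 ∈ P := by
      intro p hp; exact Finset.mem_image_of_mem _ hp
    have h00 : pt D 0 0 ∈ P := hmemP (0, 0) ((hmemI _).mpr ⟨by omega, by omega⟩)
    have hvs : vectorSpan ℝ (↑P : Set (Fin D → ℝ)) = ⊤ := by
      have hbasis : ∀ a : Fin D, (Pi.basisFun ℝ (Fin D)) a ∈
          vectorSpan ℝ (↑P : Set (Fin D → ℝ)) := by
        intro a
        rcases Nat.even_or_odd (a : ℕ) with ⟨i, hi⟩ | ⟨i, hi⟩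
        · have hik : i < k := by omega
          have heq : (Pi.basisFun ℝ (Fin D)) a = pt D i 1 -ᵥ pt D i 0 := by
            funext b
            simp only [Pi.basisFun_apply, vsub_eq_sub, Pi.sub_apply, pt]
            rcases eq_or_ne b a with rfl | hba
            · rw [Pi.single_eq_same, if_pos (by omega)]; norm_num
            · rw [Pi.single_eq_of_ne hba]
              by_cases hb2 : (b : ℕ) = 2 * i
              · exfalso; apply hba; apply Fin.ext; omega
              · rw [if_neg hb2, if_neg hb2]; ring
          rw [heq]
          exact vsub_mem_vectorSpan ℝ
            (hmemP (i, 1) ((hmemI _).mpr ⟨hik, by omega⟩))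
            (hmemP (i, 0) ((hmemI _).mpr ⟨hik, by omega⟩))
        · have hik : i + 1 < k := by omega
          have heq : (Pi.basisFun ℝ (Fin D)) a = pt D (i+1) 0 -ᵥ pt D 0 0 := by
            funext b
            have hs : (Pi.single a 1 : Fin D → ℝ) b = if (b : ℕ) = (a : ℕ) then 1 else 0 := by
              rcases eq_or_ne b a with rfl | hba
              · rw [Pi.single_eq_same, if_pos rfl]
              · rw [Pi.single_eq_of_ne hba, if_neg (fun hh => hba (Fin.ext hh))]
            simp only [Pi.basisFun_apply, vsub_eq_sub, Pi.sub_apply, pt, hs]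
            split_ifs <;> first | (exfalso; assumption) | (exfalso; omega) | norm_num
          rw [heq]
          exact vsub_mem_vectorSpan ℝ
            (hmemP (i + 1, 0) ((hmemI _).mpr ⟨hik, by omega⟩)) h00
      rw [eq_top_iff, ← (Pi.basisFun ℝ (Fin D)).span_eq]
      exact Submodule.span_le.mpr (by rintro _ ⟨a, rfl⟩; exact hbasis a)
    have hne : ((affineSpan ℝ (↑P : Set (Fin D → ℝ)) : AffineSubspace ℝ _) : Set _).Nonempty :=
      ⟨pt D 0 0, subset_affineSpan ℝ _ h00⟩
    rw [← AffineSubspace.direction_eq_top_iff_of_nonempty hne, direction_affineSpan]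
    exact hvs
  · intro x hx
    obtain ⟨p0, hp0, rfl⟩ := Finset.mem_image.mp hx
    have hp0k : p0.1 < k := ((hmemI p0).mp hp0).1
    have hp0m : p0.2 < m := ((hmemI p0).mp hp0).2
    have hb0 : 2 * p0.1 < D := hbnd p0 hp0
    have hmemP : ∀ p : ℕ × ℕ, p ∈ I → pt D p.1 p.2 ∈ P := by
      intro p hp; exact Finset.mem_image_of_mem _ hp
    set t' : ℕ := if p0.2 = 0 then 1 else 0 with ht'
    have ht'm : t' < m := by rw [ht']; split <;> omega
    have ht'ne : t' ≠ p0.2 := by rw [ht']; split <;> omega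
    have ht'r : ((t' : ℕ) : ℝ) ≠ ((p0.2 : ℕ) : ℝ) := fun hh => ht'ne (Nat.cast_inj.mp hh)
    -- all points on the same base line span the same line
    have hkey : ∀ u u' : ℕ, ((u' : ℝ) ≠ (p0.2 : ℝ)) →
        pt D p0.1 u ∈ lineOf D p0 (p0.1, u') := by
      intro u u' hu'
      have hne : (u' : ℝ) - (p0.2 : ℝ) ≠ 0 := sub_ne_zero.mpr hu'
      refine (mem_line_iff D p0 (p0.1, u') (p0.1, u)).mpr
        ⟨((u : ℝ) - (p0.2 : ℝ)) / ((u' : ℝ) - (p0.2 : ℝ)), fun a => ?_⟩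
      have hcc : ((u : ℝ) - (p0.2 : ℝ)) / ((u' : ℝ) - (p0.2 : ℝ)) * ((u' : ℝ) - (p0.2 : ℝ))
          = (u : ℝ) - (p0.2 : ℝ) := div_mul_cancel₀ _ hne
      simp only [pt]
      split_ifs <;> first | ring1 | linear_combination hcc | linear_combination -hcc
    have hlineOf_eq : ∀ s : ℕ, ((s : ℝ) ≠ (p0.2 : ℝ)) →
        lineOf D p0 (p0.1, s) = lineOf D p0 (p0.1, t') := by
      intro s hs
      apply le_antisymm
      · rw [lineOf, affineSpan_le]
        rintro z hz
        simp only [Set.mem_insert_iff, Set.mem_singleton_iff] at hz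
        rcases hz with rfl | rfl
        · exact subset_affineSpan ℝ _ (Set.mem_insert _ _)
        · exact hkey s t' ht'r
      · rw [lineOf, affineSpan_le]
        rintro z hz
        simp only [Set.mem_insert_iff, Set.mem_singleton_iff] at hz
        rcases hz with rfl | rfl
        · exact subset_affineSpan ℝ _ (Set.mem_insert _ _)
        · exact hkey t' s hs
    have hcore : ∀ w w' : ℕ × ℕ, 2 * w.1 < D → 2 * w'.1 < D → w.1 ≠ p0.1 →
        pt D w.1 w.2 ∈ lineOf D p0 w' → w' = w := by
      intro w w' hw hw' hwp hmem
      obtain ⟨lam, hlam⟩ := (mem_line_iff D p0 w' w).mp hmem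
      have := core hb0 hw hw' hwp hlam
      exact Prod.ext this.1 this.2
    set B : Finset (ℕ × ℕ) := I.filter (fun p => p.1 ≠ p0.1) with hB
    have hsetEq : linesThrough P (pt D p0.1 p0.2) =
        ↑(insert (lineOf D p0 (p0.1, t')) (B.image (lineOf D p0))) := by
      ext L
      simp only [linesThrough, Set.mem_setOf_eq, Finset.coe_insert, Set.mem_insert_iff,
        Finset.mem_coe]
      constructor
      · rintro ⟨pp, hpP, hpx, rfl⟩
        obtain ⟨w, hwI, rfl⟩ := Finset.mem_image.mp hpP
        by_cases hw1 : w.1 = p0.1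
        · left
          have hw2 : (w.2 : ℝ) ≠ (p0.2 : ℝ) := by
            intro hh
            exact hpx (by rw [hw1, Nat.cast_inj.mp hh])
          rw [← hlineOf_eq w.2 hw2, hw1]
          rfl
        · right
          exact Finset.mem_image_of_mem _ (Finset.mem_filter.mpr ⟨hwI, hw1⟩)
      · rintro (rfl | hL)
        · refine ⟨pt D p0.1 t', hmemP (p0.1, t') ((hmemI _).mpr ⟨hp0k, ht'm⟩), ?_, rfl⟩
          intro heq
          exact ht'ne (pt_inj hb0 hb0 heq).2
        · obtain ⟨w, hwB, rfl⟩ := Finset.mem_image.mp hL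
          obtain ⟨hwI, hw1⟩ := Finset.mem_filter.mp hwB
          exact ⟨pt D w.1 w.2, hmemP w hwI,
            fun heq => hw1 (pt_inj (hbnd w hwI) hb0 heq).1, rfl⟩
    rw [hsetEq, Set.ncard_coe_finset]
    have hnot : lineOf D p0 (p0.1, t') ∉ B.image (lineOf D p0) := by
      intro hmem
      obtain ⟨w, hwB, hgw⟩ := Finset.mem_image.mp hmem
      obtain ⟨hwI, hw1⟩ := Finset.mem_filter.mp hwB
      have hmemw : pt D w.1 w.2 ∈ lineOf D p0 (p0.1, t') := by
        rw [← hgw]; exact right_mem_affineSpan_pair ℝ _ _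
      have h2 := hcore w (p0.1, t') (hbnd w hwI) hb0 hw1 hmemw
      exact hw1 (by rw [← h2])
    have hinjB : Set.InjOn (lineOf D p0) ↑B := by
      intro w hw w' hw' heq
      obtain ⟨hwI, hw1⟩ := Finset.mem_filter.mp (Finset.mem_coe.mp hw)
      obtain ⟨hwI', hw1'⟩ := Finset.mem_filter.mp (Finset.mem_coe.mp hw')
      have hmemw : pt D w.1 w.2 ∈ lineOf D p0 w' := by
        rw [← heq]; exact right_mem_affineSpan_pair ℝ _ _
      exact (hcore w w' (hbnd w hwI) (hbnd w' hwI') hw1 hmemw).symm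
    rw [Finset.card_insert_of_notMem hnot, Finset.card_image_of_injOn hinjB]
    have hBcard : B.card = (k - 1) * m := by
      have : B = ((Finset.range k).erase p0.1) ×ˢ Finset.range m := by
        ext w
        simp only [hB, hI, Finset.mem_filter, Finset.mem_product, Finset.mem_erase,
          Finset.mem_range]
        tauto
      rw [this, Finset.card_product, Finset.card_erase_of_mem (Finset.mem_range.mpr hp0k)]
      simp [Finset.card_range]
    rw [hBcard, hkm]
    have hDk : (D : ℝ) + 1 = 2 * (k : ℝ) := by
      have : D + 1 = 2 * k := by omega
      exact_mod_cast congrArg (Nat.cast : ℕ → ℝ) this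
    rw [hDk]
    have hk0 : (k : ℝ) ≠ 0 := Nat.cast_ne_zero.mpr (by omega)
    push_cast [Nat.cast_sub (by omega : 1 ≤ k)]
    field_simp
end

section
/- For every integer d ≥ 2, every norm ‖·‖ on ℝ^d, and every integer n ≥ d + 1, there exists a set P of n points in ℝ^d whose affine span is all of ℝ^d such that P determines at most d·n distinct distances with respect to ‖·‖. -/
/-- For every `d ≥ 2`, every norm `N` on `ℝ^d` (given as a seminorm vanishing
only at `0`), and every `n ≥ d + 1`, there is a set `P` of `n` points affinely
spanning `ℝ^d` that determines at most `d·n` distinct distances with respect to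
`N` (namely, `n − d + 1` points in arithmetic progression on a line together
with `d − 1` additional points in general position off that line). -/
theorem exists_config_few_distances (d : ℕ) (hd : 2 ≤ d)
    (N : Seminorm ℝ (EuclideanSpace ℝ (Fin d)))
    (hN : ∀ x, N x = 0 → x = 0)
    (n : ℕ) (hn : d + 1 ≤ n) :
    ∃ P : Finset (EuclideanSpace ℝ (Fin d)),
      P.card = n ∧
      affineSpan ℝ (P : Set (EuclideanSpace ℝ (Fin d))) = ⊤ ∧
      {r : ℝ | ∃ p ∈ P, ∃ q ∈ P, p ≠ q ∧ N (p - q) = r}.ncard ≤ d * n := by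
  classical
  have hdpos : 0 < d := by omega
  set z : Fin d := ⟨0, hdpos⟩ with hz
  set e : Fin d → EuclideanSpace ℝ (Fin d) := fun i => EuclideanSpace.single i (1:ℝ) with he
  have he_apply : ∀ i j : Fin d, e i j = if j = i then (1:ℝ) else 0 := by
    intro i j; simp [he, EuclideanSpace.single_apply]
  have hline_apply : ∀ (k : ℝ) (j : Fin d), j ≠ z → (k • e z) j = 0 := by
    intro k j hj
    have : (k • e z) j = k * e z j := rfl
    rw [this, he_apply]
    simp [hj]
  have hline_zero : ∀ (k : ℝ), (k • e z) z = k := by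
    intro k
    have : (k • e z) z = k * e z z := rfl
    rw [this, he_apply]; simp
  set m := n - d + 1 with hm
  have hm2 : 2 ≤ m := by omega
  set L : Finset (EuclideanSpace ℝ (Fin d)) :=
    (Finset.range m).image (fun k : ℕ => (k:ℝ) • e z) with hL
  set E : Finset (EuclideanSpace ℝ (Fin d)) :=
    (Finset.univ.erase z).image e with hE
  have he_inj : Function.Injective e := by
    intro i j hij
    by_contra hne
    have : e i i = e j i := congrArg (fun v : EuclideanSpace ℝ (Fin d) => v i) hij
    rw [he_apply, he_apply, if_pos rfl, if_neg hne] at this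
    norm_num at this
  have hLcard : L.card = m := by
    rw [hL, Finset.card_image_of_injOn, Finset.card_range]
    intro a _ b _ hab
    have h2 : ((a:ℝ) • e z) z = ((b:ℝ) • e z) z := congrArg (fun v : EuclideanSpace ℝ (Fin d) => v z) hab
    rw [hline_zero, hline_zero] at h2
    exact Nat.cast_injective (R := ℝ) h2
  have hEcard : E.card = d - 1 := by
    rw [hE, Finset.card_image_of_injective _ he_inj, Finset.card_erase_of_mem (Finset.mem_univ _),
      Finset.card_univ, Fintype.card_fin]
  have hdisj : Disjoint L E := by
    rw [Finset.disjoint_left]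
    intro x hxL hxE
    rw [hL, Finset.mem_image] at hxL
    rw [hE, Finset.mem_image] at hxE
    obtain ⟨k, _, hk⟩ := hxL
    obtain ⟨i, hi, hix⟩ := hxE
    have hi0 : i ≠ z := (Finset.mem_erase.mp hi).1
    have : ((k:ℝ) • e z) i = e i i := congrArg (fun v : EuclideanSpace ℝ (Fin d) => v i) (hk.trans hix.symm)
    rw [hline_apply _ _ hi0, he_apply] at this
    simp at this
  refine ⟨L ∪ E, ?_, ?_, ?_⟩
  · rw [Finset.card_union_of_disjoint hdisj, hLcard, hEcard]; omega
  · -- affine span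
    have h0 : (0 : EuclideanSpace ℝ (Fin d)) ∈ (L : Set _) := by
      rw [hL]
      simp only [Finset.coe_image, Set.mem_image]
      exact ⟨0, by simpa using (by omega : 0 < m), by simp⟩
    have hmemP : ∀ i : Fin d, e i ∈ ((L ∪ E : Finset _) : Set _) := by
      intro i
      by_cases hi : i = z
      · subst hi
        apply Finset.mem_coe.mpr; apply Finset.mem_union_left
        rw [hL, Finset.mem_image]
        exact ⟨1, Finset.mem_range.mpr (by omega), by norm_num⟩
      · apply Finset.mem_coe.mpr; apply Finset.mem_union_right
        rw [hE, Finset.mem_image]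
        exact ⟨i, Finset.mem_erase.mpr ⟨hi, Finset.mem_univ _⟩, rfl⟩
    have h0P : (0 : EuclideanSpace ℝ (Fin d)) ∈ ((L ∪ E : Finset _) : Set _) := by
      apply Set.mem_of_mem_of_subset h0
      simp [Finset.coe_union]
    rw [AffineSubspace.affineSpan_eq_top_iff_vectorSpan_eq_top_of_nonempty ℝ _ _ ⟨0, h0P⟩]
    rw [eq_top_iff]
    have hbasis : Submodule.span ℝ (Set.range e) = ⊤ := by
      have : Set.range e = Set.range (EuclideanSpace.basisFun (Fin d) ℝ) := by
        ext x
        simp only [Set.mem_range]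
        constructor
        · rintro ⟨i, rfl⟩; exact ⟨i, by rw [EuclideanSpace.basisFun_apply]⟩
        · rintro ⟨i, rfl⟩; exact ⟨i, by rw [EuclideanSpace.basisFun_apply]⟩
      rw [this]
      exact (EuclideanSpace.basisFun (Fin d) ℝ).toBasis.span_eq
    rw [← hbasis]
    apply Submodule.span_le.mpr
    rintro x ⟨i, rfl⟩
    have : e i -ᵥ (0 : EuclideanSpace ℝ (Fin d)) ∈
        vectorSpan ℝ ((L ∪ E : Finset _) : Set _) :=
      vsub_mem_vectorSpan ℝ (hmemP i) h0P
    simpa using this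
  · -- distance count
    set P := L ∪ E with hP
    set F : Finset ℝ :=
      (Finset.range n).image (fun k : ℕ => (k:ℝ) * N (e z)) ∪
      (Finset.univ.erase z).biUnion (fun i => P.image (fun p => N (p - e i))) with hF
    have hsub : {r : ℝ | ∃ p ∈ P, ∃ q ∈ P, p ≠ q ∧ N (p - q) = r} ⊆ (F : Set ℝ) := by
      rintro r ⟨p, hp, q, hq, hpq, rfl⟩
      have hEcase : ∀ a b : EuclideanSpace ℝ (Fin d), a ∈ P → b ∈ E → N (a - b) ∈ F := by
        intro a b ha hb
        rw [hE, Finset.mem_image] at hb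
        obtain ⟨i, hi, rfl⟩ := hb
        rw [hF]
        apply Finset.mem_union_right
        rw [Finset.mem_biUnion]
        exact ⟨i, hi, Finset.mem_image.mpr ⟨a, ha, rfl⟩⟩
      rcases Finset.mem_union.mp hq with hqL | hqE
      · rcases Finset.mem_union.mp hp with hpL | hpE
        · -- both on line
          rw [hL, Finset.mem_image] at hpL hqL
          obtain ⟨k, hk, rfl⟩ := hpL
          obtain ⟨j, hj, rfl⟩ := hqL
          have hkj : (k:ℝ) • e z - (j:ℝ) • e z = ((k:ℝ) - j) • e z := by
            rw [sub_smul]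
          rw [hkj, map_smul_eq_mul, Real.norm_eq_abs]
          rw [Finset.mem_range] at hk hj
          rcases le_total j k with h | h
          · have : |(k:ℝ) - j| = ((k - j : ℕ) : ℝ) := by
              rw [Nat.cast_sub h, abs_of_nonneg]
              simp [sub_nonneg, Nat.cast_le, h]
            rw [this]
            apply Finset.mem_coe.mpr
            apply Finset.mem_union_left
            exact Finset.mem_image.mpr ⟨k - j, Finset.mem_range.mpr (by omega), rfl⟩
          · have : |(k:ℝ) - j| = ((j - k : ℕ) : ℝ) := by
              rw [Nat.cast_sub h, ← abs_neg, neg_sub, abs_of_nonneg]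
              simp [sub_nonneg, Nat.cast_le, h]
            rw [this]
            apply Finset.mem_coe.mpr
            apply Finset.mem_union_left
            exact Finset.mem_image.mpr ⟨j - k, Finset.mem_range.mpr (by omega), rfl⟩
        · -- p extra, use symmetry
          have : N (p - q) = N (q - p) := by rw [← map_neg_eq_map N, neg_sub]
          rw [this]
          exact hEcase q p hq hpE
      · exact hEcase p q hp hqE
    calc {r : ℝ | ∃ p ∈ P, ∃ q ∈ P, p ≠ q ∧ N (p - q) = r}.ncard
        ≤ (F : Set ℝ).ncard := Set.ncard_le_ncard hsub (F.finite_toSet)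
      _ = F.card := Set.ncard_coe_finset F
      _ ≤ ((Finset.range n).image (fun k : ℕ => (k:ℝ) * N (e z))).card +
          ((Finset.univ.erase z).biUnion
            (fun i => P.image (fun p => N (p - e i)))).card := Finset.card_union_le _ _
      _ ≤ n + (d - 1) * n := by
          gcongr
          · exact le_trans (Finset.card_image_le) (by simp)
          · apply le_trans (Finset.card_biUnion_le)
            apply le_trans (Finset.sum_le_card_nsmul _ _ n
              (fun i _ => le_trans Finset.card_image_le (by
                rw [hP, Finset.card_union_of_disjoint hdisj, hLcard, hEcard]; omega)))
            simp only [smul_eq_mul]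
            rw [Finset.card_erase_of_mem (Finset.mem_univ _), Finset.card_univ, Fintype.card_fin]
      _ ≤ d * n := by
          have h1 : n + (d-1) * n = (1 + (d-1)) * n := by ring
          have h2 : 1 + (d - 1) = d := by omega
          rw [h1, h2]
end
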